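/- Let f : ℝ^d × ℝ^d → ℝ be C² and suppose that the Hessian in z satisfies ∇²_z f(z,x) ⪰ λ I with λ > 0 uniformly, and the mixed Hessian satisfies ‖∇²_{xz} f(z,x)‖ ≤ L uniformly. Let z*(x) be the unique minimizer of z ↦ f(z,x). Then ‖z*(x) − z*(x')‖ ≤ (L/λ)‖x − x'‖ for all x, x' ∈ ℝ^d; in particular z* is Lipschitz continuous. -/

import Mathlib

/-!
The minimizer `z* x` is the zero of the partial gradient `g(z, x) = ∇_z f(z, x)`. The Hessian
bound makes `g(·, x)` `λ`-strongly monotone and the mixed-Hessian bound makes `g(z, ·)`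
`L`-Lipschitz, so with `w = z* x - z* x'`
`λ ‖w‖² ≤ ⟪w, g(z* x, x) - g(z* x', x)⟫ = ⟪w, g(z* x', x') - g(z* x', x)⟫ ≤ L ‖w‖ ‖x - x'‖`.
-/

open scoped RealInnerProductSpace

variable {E F : Type*} [NormedAddCommGroup E] [InnerProductSpace ℝ E]

theorem IsLocalMin.gradient_eq_zero [CompleteSpace E] {f : E → ℝ} {a : E}
    (h : IsLocalMin f a) : gradient f a = 0 := by
  simp only [gradient, h.fderiv_eq_zero, map_zero]

theorem ContDiff.gradient_left [CompleteSpace E] [NormedAddCommGroup F] [NormedSpace ℝ F]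
    {f : E → F → ℝ} {m n : WithTop ℕ∞} (hf : ContDiff ℝ m (Function.uncurry f))
    (hnm : n + 1 ≤ m) : ContDiff ℝ n fun p : E × F => gradient (fun u => f u p.2) p.1 := by
  have hf' : ContDiff ℝ m (Function.uncurry fun (p : E × F) (u : E) => f u p.2) :=
    hf.comp (contDiff_snd.prodMk (contDiff_snd.comp contDiff_fst))
  exact (InnerProductSpace.toDual ℝ E).symm.contDiff.comp (hf'.fderiv contDiff_fst hnm)

theorem strongMonotone_of_le_inner_fderiv {g : E → E} {m : ℝ} (hg : Differentiable ℝ g)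
    (h : ∀ z v, m * ‖v‖ ^ 2 ≤ ⟪v, fderiv ℝ g z v⟫) (a b : E) :
    m * ‖a - b‖ ^ 2 ≤ ⟪a - b, g a - g b⟫ := by
  set w := a - b
  let φ : ℝ → ℝ := fun t => ⟪w, g (b + t • w)⟫
  have hφ : ∀ t, HasDerivAt φ ⟪w, fderiv ℝ g (b + t • w) w⟫ t := fun t => by
    have hline : HasDerivAt (fun t : ℝ => b + t • w) w t := by
      simpa using ((hasDerivAt_id t).smul_const w).const_add b
    exact (innerSL ℝ w).hasFDerivAt.comp_hasDerivAt t
      ((hg _).hasFDerivAt.comp_hasDerivAt t hline)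
  have hgrowth := mul_sub_le_image_sub_of_le_deriv (fun t => (hφ t).differentiableAt)
    (fun t => (hφ t).deriv ▸ h _ w) zero_le_one
  have hend : b + w = a := add_sub_cancel b a
  simpa [φ, hend, inner_sub_right] using hgrowth

theorem norm_sub_le_of_strongMonotone_of_lipschitz [SeminormedAddCommGroup F]
    {g : E → F → E} {z : F → E} {m L : ℝ} (hm : 0 < m) (hL : 0 ≤ L)
    (hzero : ∀ x, g (z x) x = 0)
    (hmono : ∀ x a b, m * ‖a - b‖ ^ 2 ≤ ⟪a - b, g a x - g b x⟫)
    (hlip : ∀ a x x', ‖g a x - g a x'‖ ≤ L * ‖x - x'‖) (x x' : F) :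
    ‖z x - z x'‖ ≤ L / m * ‖x - x'‖ := by
  set w := z x - z x'
  have key : m * ‖w‖ ^ 2 ≤ ‖w‖ * (L * ‖x - x'‖) :=
    calc m * ‖w‖ ^ 2 ≤ ⟪w, g (z x) x - g (z x') x⟫ := hmono x _ _
      _ = ⟪w, g (z x') x' - g (z x') x⟫ := by rw [hzero, hzero]
      _ ≤ ‖w‖ * ‖g (z x') x' - g (z x') x‖ := real_inner_le_norm _ _
      _ ≤ ‖w‖ * (L * ‖x - x'‖) := by
        rw [norm_sub_rev x]; gcongr; exact hlip _ _ _
  rw [div_mul_eq_mul_div, le_div_iff₀ hm]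
  rcases (norm_nonneg w).eq_or_lt with hw | hw
  · rw [← hw, zero_mul]; positivity
  · nlinarith

/-- If `f(z,x)` is C², uniformly `λ`-strongly convex in `z` (Hessian in `z` ⪰ λ I) and
with mixed Hessian operator norm at most `L`, then the minimizer map
`z*(x) = argmin_z f(z,x)` is `(L/λ)`-Lipschitz. -/
theorem stmt_8 (d : ℕ)
    (f : EuclideanSpace ℝ (Fin d) → EuclideanSpace ℝ (Fin d) → ℝ)
    (lam L : ℝ) (hlam : 0 < lam) (hL : 0 ≤ L)
    (hf : ContDiff ℝ 2 (Function.uncurry f))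
    (hhess : ∀ z x v, lam * ‖v‖ ^ 2 ≤
      ⟪v, fderiv ℝ (fun w => gradient (fun u => f u x) w) z v⟫)
    (hmix : ∀ z x, ‖fderiv ℝ (fun x' => gradient (fun u => f u x') z) x‖ ≤ L)
    (zstar : EuclideanSpace ℝ (Fin d) → EuclideanSpace ℝ (Fin d))
    (hzstar : ∀ x z, f (zstar x) x ≤ f z x) :
    ∀ x x', ‖zstar x - zstar x'‖ ≤ L / lam * ‖x - x'‖ := by
  have hgrad : Differentiable ℝ fun p : _ × _ => gradient (fun u => f u p.2) p.1 :=
    (hf.gradient_left (n := 1) le_rfl).differentiable one_ne_zero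
  refine norm_sub_le_of_strongMonotone_of_lipschitz (g := fun z x => gradient (f · x) z)
    hlam hL (fun x => IsLocalMin.gradient_eq_zero (Filter.Eventually.of_forall (hzstar x))) ?_ ?_
  · exact fun x => strongMonotone_of_le_inner_fderiv
      (hgrad.comp (differentiable_id.prodMk (differentiable_const x))) (hhess · x)
  · intro z x x'
    exact convex_univ.norm_image_sub_le_of_norm_fderiv_le
      (fun y _ => hgrad.comp ((differentiable_const z).prodMk differentiable_id) y)
      (fun y _ => hmix z y) (Set.mem_univ x') (Set.mem_univ x)
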